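/- arXiv:1507.07660 — 2 statements merged into one kernel-verified Lean document; each statement's English description precedes it below -/
import Mathlib

section
/- For every natural number n and every integer k with 0 ≤ k ≤ n, the Motzkin triangle entry T(n,k) equals the coefficient of x^k in the polynomial (1 + x + x^2)^n · (1 - x^2). -/
open Polynomial

/-- The Motzkin triangle: `T n 0 = 1`, `T n k = 0` for `k < 0` or `k > n`,
and `T n k = T (n-1) (k-2) + T (n-1) (k-1) + T (n-1) k` for `n ≥ 1`, `1 ≤ k ≤ n`. -/
def motzkinT : ℕ → ℤ → ℤ
  | 0, k => if k = 0 then 1 else 0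
  | n + 1, k =>
    if k < 0 ∨ ((n : ℤ) + 1) < k then 0
    else if k = 0 then 1
    else motzkinT n (k - 2) + motzkinT n (k - 1) + motzkinT n k

lemma motzkinT_eq_zero {n : ℕ} {k : ℤ} (h : k < 0 ∨ (n : ℤ) < k) : motzkinT n k = 0 := by
  cases n with
  | zero =>
    rw [motzkinT, if_neg (by omega)]
  | succ n =>
    rw [motzkinT, if_pos (by push_cast at h ⊢; omega)]

lemma motzkinT_zero (n : ℕ) : motzkinT n 0 = 1 := by
  cases n <;> simp [motzkinT] <;> positivity

lemma motzkinT_rec (n : ℕ) {k : ℤ} (h1 : 1 ≤ k) (h2 : k ≤ (n : ℤ) + 1) :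
    motzkinT (n + 1) k = motzkinT n (k - 2) + motzkinT n (k - 1) + motzkinT n k := by
  rw [motzkinT, if_neg (by omega), if_neg (by omega)]

def coeffZ (p : ℤ[X]) (k : ℤ) : ℤ := if 0 ≤ k then p.coeff k.toNat else 0

lemma coeffZ_add (p q : ℤ[X]) (k : ℤ) : coeffZ (p + q) k = coeffZ p k + coeffZ q k := by
  unfold coeffZ; split <;> simp

lemma coeffZ_X_mul (p : ℤ[X]) (k : ℤ) : coeffZ (X * p) k = coeffZ p (k - 1) := by
  unfold coeffZ
  by_cases h : 0 ≤ k
  · rw [if_pos h]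
    by_cases h' : 0 ≤ k - 1
    · rw [if_pos h']
      have hk : k.toNat = (k - 1).toNat + 1 := by omega
      rw [hk, coeff_X_mul]
    · rw [if_neg h']
      have hk : k.toNat = 0 := by omega
      rw [hk, mul_coeff_zero]
      simp
  · rw [if_neg h, if_neg (by omega)]

lemma coeffZ_tri (p : ℤ[X]) (k : ℤ) :
    coeffZ ((1 + X + X ^ 2) * p) k = coeffZ p k + coeffZ p (k - 1) + coeffZ p (k - 2) := by
  have h : (1 + X + X ^ 2 : ℤ[X]) * p = p + X * p + X * (X * p) := by ring
  have h2 : k - 1 - 1 = k - 2 := by ring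
  rw [h, coeffZ_add, coeffZ_add, coeffZ_X_mul, coeffZ_X_mul, coeffZ_X_mul, h2]

lemma key (n : ℕ) (k : ℤ) :
    coeffZ ((1 + X + X ^ 2 : ℤ[X]) ^ n * (1 - X ^ 2)) k
      = motzkinT n k - motzkinT n (2 * (n : ℤ) + 2 - k) := by
  induction n generalizing k with
  | zero =>
    simp only [pow_zero, one_mul, Nat.cast_zero]
    unfold coeffZ
    by_cases h : 0 ≤ k
    · rw [if_pos h, coeff_sub, coeff_one, coeff_X_pow]
      rw [motzkinT, motzkinT]
      split_ifs <;> omega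
    · rw [if_neg h, motzkinT, motzkinT, if_neg (by omega), if_neg (by omega)]
      ring
  | succ n ih =>
    have hp : (1 + X + X ^ 2 : ℤ[X]) ^ (n + 1) * (1 - X ^ 2)
        = (1 + X + X ^ 2) * ((1 + X + X ^ 2) ^ n * (1 - X ^ 2)) := by ring
    rw [hp, coeffZ_tri, ih, ih, ih]
    push_cast
    have Z := @motzkinT_eq_zero
    rcases lt_trichotomy k 0 with hk | hk | hk
    · rw [Z (n := n) (k := k) (Or.inl hk),
          Z (n := n) (k := k - 1) (Or.inl (by omega)),
          Z (n := n) (k := k - 2) (Or.inl (by omega)),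
          Z (n := n + 1) (k := k) (Or.inl hk),
          Z (n := n) (k := 2 * (n : ℤ) + 2 - k) (Or.inr (by omega)),
          Z (n := n) (k := 2 * (n : ℤ) + 2 - (k - 1)) (Or.inr (by omega)),
          Z (n := n) (k := 2 * (n : ℤ) + 2 - (k - 2)) (Or.inr (by omega)),
          Z (n := n + 1) (k := 2 * ((n : ℤ) + 1) + 2 - k) (Or.inr (by push_cast; omega))]
      ring
    · subst hk
      rw [motzkinT_zero, motzkinT_zero,
          Z (n := n) (k := (0 : ℤ) - 1) (Or.inl (by omega)),
          Z (n := n) (k := (0 : ℤ) - 2) (Or.inl (by omega)),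
          Z (n := n) (k := 2 * (n : ℤ) + 2 - 0) (Or.inr (by omega)),
          Z (n := n) (k := 2 * (n : ℤ) + 2 - ((0 : ℤ) - 1)) (Or.inr (by omega)),
          Z (n := n) (k := 2 * (n : ℤ) + 2 - ((0 : ℤ) - 2)) (Or.inr (by omega)),
          Z (n := n + 1) (k := 2 * ((n : ℤ) + 1) + 2 - 0) (Or.inr (by push_cast; omega))]
      ring
    · rcases le_or_gt k ((n : ℤ) + 1) with hk2 | hk2
      · -- 1 ≤ k ≤ n+1
        rw [motzkinT_rec n (by omega) hk2,
            Z (n := n) (k := 2 * (n : ℤ) + 2 - k) (Or.inr (by omega)),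
            Z (n := n) (k := 2 * (n : ℤ) + 2 - (k - 1)) (Or.inr (by omega)),
            Z (n := n) (k := 2 * (n : ℤ) + 2 - (k - 2)) (Or.inr (by omega)),
            Z (n := n + 1) (k := 2 * ((n : ℤ) + 1) + 2 - k) (Or.inr (by push_cast; omega))]
        ring
      · rcases eq_or_lt_of_le (show (n : ℤ) + 2 ≤ k by omega) with hk3 | hk3
        · -- k = n + 2
          rw [Z (n := n) (k := k) (Or.inr (by omega)),
              Z (n := n) (k := k - 1) (Or.inr (by omega)),
              Z (n := n) (k := 2 * (n : ℤ) + 2 - (k - 1)) (Or.inr (by omega)),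
              Z (n := n) (k := 2 * (n : ℤ) + 2 - (k - 2)) (Or.inr (by omega)),
              Z (n := n + 1) (k := k) (Or.inr (by push_cast; omega)),
              Z (n := n + 1) (k := 2 * ((n : ℤ) + 1) + 2 - k) (Or.inr (by push_cast; omega)),
              show (k - 2 : ℤ) = 2 * (n : ℤ) + 2 - k by omega]
          ring
        · rcases le_or_gt k (2 * (n : ℤ) + 3) with hk4 | hk4
          · -- n+3 ≤ k ≤ 2n+3
            rw [Z (n := n) (k := k) (Or.inr (by omega)),
                Z (n := n) (k := k - 1) (Or.inr (by omega)),
                Z (n := n) (k := k - 2) (Or.inr (by omega)),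
                Z (n := n + 1) (k := k) (Or.inr (by push_cast; omega)),
                motzkinT_rec n (k := 2 * ((n : ℤ) + 1) + 2 - k) (by omega) (by omega),
                show (2 * ((n : ℤ) + 1) + 2 - k - 2 : ℤ) = 2 * (n : ℤ) + 2 - k by ring,
                show (2 * ((n : ℤ) + 1) + 2 - k - 1 : ℤ) = 2 * (n : ℤ) + 2 - (k - 1) by ring,
                show (2 * ((n : ℤ) + 1) + 2 - k : ℤ) = 2 * (n : ℤ) + 2 - (k - 2) by ring]
            ring
          · rcases eq_or_lt_of_le (show 2 * (n : ℤ) + 4 ≤ k by omega) with hk5 | hk5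
            · -- k = 2n+4
              rw [Z (n := n) (k := k) (Or.inr (by omega)),
                  Z (n := n) (k := k - 1) (Or.inr (by omega)),
                  Z (n := n) (k := k - 2) (Or.inr (by omega)),
                  Z (n := n + 1) (k := k) (Or.inr (by push_cast; omega)),
                  Z (n := n) (k := 2 * (n : ℤ) + 2 - k) (Or.inl (by omega)),
                  Z (n := n) (k := 2 * (n : ℤ) + 2 - (k - 1)) (Or.inl (by omega)),
                  show (2 * (n : ℤ) + 2 - (k - 2) : ℤ) = 0 by omega,
                  show (2 * ((n : ℤ) + 1) + 2 - k : ℤ) = 0 by omega,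
                  motzkinT_zero, motzkinT_zero]
              ring
            · -- k > 2n+4
              rw [Z (n := n) (k := k) (Or.inr (by omega)),
                  Z (n := n) (k := k - 1) (Or.inr (by omega)),
                  Z (n := n) (k := k - 2) (Or.inr (by omega)),
                  Z (n := n + 1) (k := k) (Or.inr (by push_cast; omega)),
                  Z (n := n) (k := 2 * (n : ℤ) + 2 - k) (Or.inl (by omega)),
                  Z (n := n) (k := 2 * (n : ℤ) + 2 - (k - 1)) (Or.inl (by omega)),
                  Z (n := n) (k := 2 * (n : ℤ) + 2 - (k - 2)) (Or.inl (by omega)),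
                  Z (n := n + 1) (k := 2 * ((n : ℤ) + 1) + 2 - k) (Or.inl (by omega))]
              ring

theorem motzkin_eq_coeff (n : ℕ) (k : ℤ) (hk0 : 0 ≤ k) (hkn : k ≤ (n : ℤ)) :
    motzkinT n k =
      (((1 + X + X ^ 2 : ℤ[X]) ^ n) * (1 - X ^ 2)).coeff k.toNat := by
  have h := key n k
  rw [coeffZ, if_pos hk0, motzkinT_eq_zero (n := n) (k := 2 * (n : ℤ) + 2 - k) (Or.inr (by omega))] at h
  omega
end

section
/- Let d be an even positive integer and let P(x) = ∑_{j=0}^{d} a_j x^j be a polynomial with rational coefficients satisfying the palindromic condition a_j = a_{d-j} for all 0 ≤ j ≤ d. For n ≥ 0 and integer k, let A(n,k) denote the coefficient of x^k in P(x)^n · (1 - x^2). Then for every natural number n, the sum over all integers k of A(n,k)·A(n,k+1) equals A(2n, dn+1) - A(2n, dn+3). -/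
/-!
Write `N = d n` and `Q = P ^ n * (1 - X ^ 2)`. Since `P ^ n` is palindromic of degree `N` and
`1 - X ^ 2` is antipalindromic of degree `2`, `Q` is antipalindromic of degree `N + 2`, i.e.
`Q_{N+2-k} = -Q_k`. Hence `∑ Q_k Q_{k+1} = -∑ Q_k Q_{N+1-k} = -(Q²)_{N+1}`. As `Q²` is palindromic of
degree `2N + 4`, `(Q²)_{N+1} = (Q²)_{N+3}`, and `Q² = (P ^ (2n) * (1 - X ^ 2)) * (1 - X ^ 2)` turns
`(Q²)_{N+3}` into `A(2n, N+3) - A(2n, N+1)`.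
-/

open Polynomial

namespace Polynomial

section CommSemiring

variable {R : Type*} [CommSemiring R]

theorem reflect_pow_of_natDegree_le {f : R[X]} {N : ℕ} (hf : f.natDegree ≤ N) (n : ℕ) :
    reflect (N * n) (f ^ n) = reflect N f ^ n := by
  induction n with
  | zero => simp [reflect_one]
  | succ n ih =>
    have hfn : (f ^ n).natDegree ≤ N * n := natDegree_pow_le.trans (by rw [mul_comm]; gcongr)
    rw [pow_succ, Nat.mul_succ, reflect_mul _ _ hfn hf, ih, pow_succ]

theorem coeff_sum_range_C_mul_X_pow (a : ℕ → R) (d i : ℕ) :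
    (∑ j ∈ Finset.range (d + 1), C (a j) * X ^ j).coeff i = if i ≤ d then a i else 0 := by
  simp

theorem natDegree_sum_range_C_mul_X_pow_le (a : ℕ → R) (d : ℕ) :
    (∑ j ∈ Finset.range (d + 1), C (a j) * X ^ j).natDegree ≤ d :=
  natDegree_sum_le_of_forall_le _ _ fun j hj =>
    (natDegree_C_mul_X_pow_le (a j) j).trans (Nat.lt_succ_iff.mp (Finset.mem_range.mp hj))

theorem reflect_sum_range_C_mul_X_pow {a : ℕ → R} {d : ℕ} (ha : ∀ j ≤ d, a j = a (d - j)) :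
    reflect d (∑ j ∈ Finset.range (d + 1), C (a j) * X ^ j) =
      ∑ j ∈ Finset.range (d + 1), C (a j) * X ^ j := by
  ext i
  rw [coeff_reflect, coeff_sum_range_C_mul_X_pow, coeff_sum_range_C_mul_X_pow]
  by_cases hi : i ≤ d
  · simp [revAt_le hi, hi, ha i hi]
  · rw [revAt_eq_self_of_lt (not_le.mp hi)]

def intCoeff (p : R[X]) (k : ℤ) : R :=
  if k < 0 then 0 else p.coeff k.toNat

@[simp]
theorem intCoeff_natCast (p : R[X]) (k : ℕ) : intCoeff p k = p.coeff k := by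
  simp [intCoeff]

theorem finsum_intCoeff_mul_intCoeff_add_one {p : R[X]} {B : ℕ} (hp : p.natDegree ≤ B) :
    ∑ᶠ k : ℤ, intCoeff p k * intCoeff p (k + 1) =
      ∑ k ∈ Finset.range B, p.coeff k * p.coeff (k + 1) := by
  have hsupp : Function.support (fun k : ℤ => intCoeff p k * intCoeff p (k + 1)) ⊆
      ↑((Finset.range B).map (Nat.castEmbedding : ℕ ↪ ℤ)) := by
    intro k hk
    have hk0 : 0 ≤ k := not_lt.mp fun h => left_ne_zero_of_mul hk (if_pos h)
    lift k to ℕ using hk0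
    have hk1 := right_ne_zero_of_mul hk
    rw [← Nat.cast_succ, intCoeff_natCast] at hk1
    have := le_natDegree_of_ne_zero hk1
    simp only [Finset.coe_map, Set.mem_image, Finset.mem_coe, Finset.mem_range]
    exact ⟨k, by omega, rfl⟩
  rw [finsum_eq_sum_of_support_subset _ hsupp, Finset.sum_map]
  refine Finset.sum_congr rfl fun k _ => ?_
  rw [Nat.castEmbedding_apply, ← Nat.cast_succ, intCoeff_natCast, intCoeff_natCast]

end CommSemiring

section CommRing

variable {R : Type*} [CommRing R]

theorem reflect_one_sub_X_sq : reflect 2 (1 - X ^ 2 : R[X]) = -(1 - X ^ 2) := by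
  rw [← pow_zero X, reflect_sub, reflect_monomial, reflect_monomial]
  simp [revAt_le]

theorem coeff_mul_one_sub_X_sq (p : R[X]) (m : ℕ) :
    (p * (1 - X ^ 2)).coeff (m + 2) = p.coeff (m + 2) - p.coeff m := by
  rw [mul_sub, mul_one, coeff_sub, coeff_mul_X_pow]

theorem sum_coeff_mul_coeff_add_one_of_reflect_eq_neg {Q : R[X]} {M : ℕ}
    (hQ : reflect (M + 1) Q = -Q) :
    ∑ k ∈ Finset.range (M + 1), Q.coeff k * Q.coeff (k + 1) = -(Q * Q).coeff M := by
  rw [coeff_mul, Finset.Nat.sum_antidiagonal_eq_sum_range_succ_mk, ← Finset.sum_neg_distrib]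
  refine Finset.sum_congr rfl fun k hk => ?_
  have hk : k + 1 ≤ M + 1 := Finset.mem_range.mp hk
  have := congrArg (coeff · (k + 1)) hQ
  simp only [coeff_reflect, coeff_neg, revAt_le hk, Nat.add_sub_add_right] at this
  rw [this]
  ring

theorem coeff_mul_self_add_two_of_reflect_eq_neg {Q : R[X]} {M : ℕ}
    (hdeg : Q.natDegree ≤ M + 1) (hQ : reflect (M + 1) Q = -Q) :
    (Q * Q).coeff (M + 2) = (Q * Q).coeff M := by
  have hQQ : reflect (M + 1 + (M + 1)) (Q * Q) = Q * Q := by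
    rw [reflect_mul Q Q hdeg hdeg, hQ, neg_mul_neg]
  have := congrArg (coeff · M) hQQ
  simp only [coeff_reflect, revAt_le (show M ≤ M + 1 + (M + 1) by omega)] at this
  rwa [show M + 1 + (M + 1) - M = M + 2 by omega] at this

theorem finsum_intCoeff_mul_one_sub_X_sq {p : R[X]} {N : ℕ} (hdeg : p.natDegree ≤ N)
    (hp : reflect N p = p) :
    ∑ᶠ k : ℤ, intCoeff (p * (1 - X ^ 2)) k * intCoeff (p * (1 - X ^ 2)) (k + 1) =
      (p ^ 2 * (1 - X ^ 2)).coeff (N + 1) - (p ^ 2 * (1 - X ^ 2)).coeff (N + 3) := by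
  set Q := p * (1 - X ^ 2)
  have hQdeg : Q.natDegree ≤ N + 2 :=
    natDegree_mul_le.trans (add_le_add hdeg (by compute_degree))
  have hQ : reflect (N + 2) Q = -Q := by
    rw [reflect_mul _ _ hdeg (by compute_degree), hp, reflect_one_sub_X_sq, mul_neg]
  have hQQ : Q * Q = p ^ 2 * (1 - X ^ 2) * (1 - X ^ 2) := by ring
  calc ∑ᶠ k : ℤ, intCoeff Q k * intCoeff Q (k + 1)
      = ∑ k ∈ Finset.range (N + 2), Q.coeff k * Q.coeff (k + 1) :=
        finsum_intCoeff_mul_intCoeff_add_one hQdeg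
    _ = -(Q * Q).coeff (N + 1) := sum_coeff_mul_coeff_add_one_of_reflect_eq_neg hQ
    _ = -(Q * Q).coeff (N + 1 + 2) := by rw [coeff_mul_self_add_two_of_reflect_eq_neg hQdeg hQ]
    _ = _ := by rw [hQQ, coeff_mul_one_sub_X_sq]; ring

end CommRing

end Polynomial

theorem general_triangle_convolution_general (d : ℕ) (a : ℕ → ℚ)
    (hpal : ∀ j ≤ d, a j = a (d - j))
    (P : ℚ[X]) (hP : P = ∑ j ∈ Finset.range (d + 1), C (a j) * X ^ j)
    (A : ℕ → ℤ → ℚ)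
    (hA : ∀ (n : ℕ) (k : ℤ),
      A n k = if k < 0 then 0 else (P ^ n * (1 - X ^ 2)).coeff k.toNat) :
    ∀ n : ℕ,
      ∑ᶠ k : ℤ, A n k * A n (k + 1) =
        A (2 * n) ((d : ℤ) * n + 1) - A (2 * n) ((d : ℤ) * n + 3) := by
  intro n
  have hA' (m : ℕ) : A m = intCoeff (P ^ m * (1 - X ^ 2)) := funext (hA m)
  have hPdeg : P.natDegree ≤ d := hP ▸ natDegree_sum_range_C_mul_X_pow_le a d
  have hPrefl : reflect d P = P := hP ▸ reflect_sum_range_C_mul_X_pow hpal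
  have hPn_refl : reflect (d * n) (P ^ n) = P ^ n := by
    rw [reflect_pow_of_natDegree_le hPdeg, hPrefl]
  have hPn_deg : (P ^ n).natDegree ≤ d * n := natDegree_pow_le.trans (by rw [mul_comm]; gcongr)
  have h1 : (d : ℤ) * n + 1 = ((d * n + 1 : ℕ) : ℤ) := by push_cast; rfl
  have h3 : (d : ℤ) * n + 3 = ((d * n + 3 : ℕ) : ℤ) := by push_cast; rfl
  rw [hA', hA', finsum_intCoeff_mul_one_sub_X_sq hPn_deg hPn_refl, h1, h3, intCoeff_natCast,
    intCoeff_natCast, ← pow_mul, mul_comm n]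

theorem general_triangle_convolution (d : ℕ) (hd_even : Even d) (hd_pos : 0 < d) (a : ℕ → ℚ)
    (hpal : ∀ j ≤ d, a j = a (d - j))
    (P : ℚ[X]) (hP : P = ∑ j ∈ Finset.range (d + 1), C (a j) * X ^ j)
    (A : ℕ → ℤ → ℚ)
    (hA : ∀ (n : ℕ) (k : ℤ),
      A n k = if k < 0 then 0 else (P ^ n * (1 - X ^ 2)).coeff k.toNat) :
    ∀ n : ℕ,
      ∑ᶠ k : ℤ, A n k * A n (k + 1) =
        A (2 * n) ((d : ℤ) * n + 1) - A (2 * n) ((d : ℤ) * n + 3) :=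
  general_triangle_convolution_general d a hpal P hP A hA
end
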